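/- arXiv:1610.06916 — 4 statements merged into one kernel-verified Lean document; each statement's English description precedes it below -/
import Mathlib

section
/- Let A and B be symmetric positive semidefinite d × d real matrices with A ≥ μ I and B ≥ μ I for some μ > 0 (i.e., all eigenvalues at least μ). Then ‖√A − √B‖_HS ≤ ‖A − B‖_HS/(2√μ), where √A denotes the unique symmetric positive semidefinite square root and ‖·‖_HS the Hilbert–Schmidt (Frobenius) norm. -/
open Matrix

/-- Hilbert–Schmidt (Frobenius) norm of a real matrix. -/
noncomputable def frobNorm {d m : ℕ} (A : Matrix (Fin d) (Fin m) ℝ) : ℝ :=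
  Real.sqrt (∑ i, ∑ j, (A i j) ^ 2)

section

open scoped ComplexOrder

/-- The positive semidefinite square root of a positive semidefinite matrix
(Mathlib's former `Matrix.PosSemidef.sqrt`, removed since; restored with its old definition). -/
noncomputable def Matrix.PosSemidef.sqrt {𝕜 : Type*} [RCLike 𝕜] {n : Type*} [Fintype n]
    [DecidableEq n] {A : Matrix n n 𝕜} (hA : A.PosSemidef) : Matrix n n 𝕜 :=
  hA.1.eigenvectorUnitary.1 * diagonal ((↑) ∘ (Real.sqrt ·) ∘ hA.1.eigenvalues) *
  (star hA.1.eigenvectorUnitary : Matrix n n 𝕜)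

end

/-!
Write `S = √A`, `T = √B` and `X = S - T`. Then `A - B = S X + X T`, so
`tr ((A - B) X) = tr (X S X) + tr (X T X) ≥ 2 √μ ‖X‖²` since `S, T ≥ √μ`, while
`tr ((A - B) X) ≤ ‖A - B‖ ‖X‖` by Cauchy–Schwarz for the Frobenius inner product.
-/

open scoped ComplexOrder

namespace Matrix

variable {𝕜 n : Type*} [RCLike 𝕜] [Fintype n] [DecidableEq n]

lemma IsHermitian.le_eigenvalues_of_posSemidef_sub {A : Matrix n n 𝕜} (hA : A.IsHermitian)
    {μ : ℝ} (hAμ : (A - μ • 1).PosSemidef) (i : n) : μ ≤ hA.eigenvalues i := by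
  have h := hAμ.re_dotProduct_nonneg (hA.eigenvectorBasis i)
  have hv : star ⇑(hA.eigenvectorBasis i) ⬝ᵥ ⇑(hA.eigenvectorBasis i) = 1 := by
    rw [dotProduct_comm, ← EuclideanSpace.inner_eq_star_dotProduct]
    simp
  rw [sub_mulVec, dotProduct_sub, smul_mulVec, one_mulVec, dotProduct_smul, hv] at h
  simpa [hA.eigenvalues_eq i, RCLike.real_smul_eq_coe_mul] using h

namespace PosSemidef

variable {A : Matrix n n 𝕜} (hA : A.PosSemidef)
include hA

lemma posSemidef_sqrt : hA.sqrt.PosSemidef :=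
  (posSemidef_diagonal_iff.mpr fun i ↦ by simp [Real.sqrt_nonneg]).mul_mul_conjTranspose_same _

lemma sqrt_mul_self : hA.sqrt * hA.sqrt = A := by
  conv_rhs => rw [hA.1.spectral_theorem, Unitary.conjStarAlgAut_apply]
  simp only [PosSemidef.sqrt, mul_assoc]
  rw [← mul_assoc (star _ : Matrix n n 𝕜), Unitary.coe_star_mul_self, one_mul,
    ← mul_assoc (diagonal _), diagonal_mul_diagonal]
  congr 3
  funext i
  simp [← RCLike.ofReal_mul, Real.mul_self_sqrt (hA.eigenvalues_nonneg i)]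

lemma posSemidef_sqrt_sub_smul_one {μ : ℝ} (hAμ : (A - μ • 1).PosSemidef) :
    (hA.sqrt - √μ • 1).PosSemidef := by
  set U := hA.1.eigenvectorUnitary
  have hU : (U : Matrix n n 𝕜) * star (U : Matrix n n 𝕜) = 1 := Unitary.coe_mul_star_self _
  have h : hA.sqrt - √μ • 1 = (U : Matrix n n 𝕜) *
      diagonal (RCLike.ofReal ∘ fun i ↦ √(hA.1.eigenvalues i) - √μ) *
      star (U : Matrix n n 𝕜) := by
    have hc : (√μ • 1 : Matrix n n 𝕜) = U * (√μ • 1) * star (U : Matrix n n 𝕜) := by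
      rw [mul_smul_comm, mul_one, smul_mul_assoc, hU]
    rw [hc, PosSemidef.sqrt, ← sub_mul, ← mul_sub]
    congr 2
    ext i j
    by_cases hij : i = j <;> simp [hij, RCLike.real_smul_eq_coe_mul]
  rw [h]
  refine PosSemidef.mul_mul_conjTranspose_same (posSemidef_diagonal_iff.mpr fun i ↦ ?_) _
  simpa using Real.sqrt_le_sqrt (hA.1.le_eigenvalues_of_posSemidef_sub hAμ i)

end PosSemidef

lemma PosSemidef.smul_trace_mul_self_le_trace_mul_mul {M X : Matrix n n 𝕜} {c : ℝ}
    (hM : (M - c • 1).PosSemidef) (hX : X.IsHermitian) :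
    c • trace (X * X) ≤ trace (X * M * X) := by
  have h := (hM.conjTranspose_mul_mul_same X).trace_nonneg
  rw [hX.eq, mul_sub, sub_mul, mul_smul_comm, smul_mul_assoc, mul_one, trace_sub,
    trace_smul] at h
  exact sub_nonneg.mp h

end Matrix

lemma frobNorm_nonneg {d m : ℕ} (M : Matrix (Fin d) (Fin m) ℝ) : 0 ≤ frobNorm M :=
  Real.sqrt_nonneg _

lemma sq_frobNorm {d m : ℕ} (M : Matrix (Fin d) (Fin m) ℝ) :
    frobNorm M ^ 2 = ∑ i, ∑ j, M i j ^ 2 :=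
  Real.sq_sqrt (by positivity)

lemma trace_transpose_mul_self_eq_sq_frobNorm {d m : ℕ} (M : Matrix (Fin d) (Fin m) ℝ) :
    trace (Mᵀ * M) = frobNorm M ^ 2 := by
  rw [sq_frobNorm, Finset.sum_comm]
  simp [trace, mul_apply, sq]

lemma trace_mul_le_frobNorm_mul_frobNorm {d m : ℕ} (M : Matrix (Fin d) (Fin m) ℝ)
    (N : Matrix (Fin m) (Fin d) ℝ) : trace (M * N) ≤ frobNorm M * frobNorm N := by
  have hN : frobNorm N = √(∑ i, ∑ j, N j i ^ 2) := by rw [frobNorm, Finset.sum_comm]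
  rw [hN, frobNorm]
  simp only [trace, diag, mul_apply, ← Finset.sum_product']
  exact Real.sum_mul_le_sqrt_mul_sqrt _ _ _

/-- Lipschitz bound for the matrix square root on uniformly positive definite matrices:
if `A, B` are symmetric positive semidefinite with `A ≥ μ I`, `B ≥ μ I`, `μ > 0`, then
`‖√A - √B‖_HS ≤ ‖A - B‖_HS / (2√μ)`. -/
theorem sqrt_lipschitz_of_posdef
    {d : ℕ} (A B : Matrix (Fin d) (Fin d) ℝ) (μ : ℝ) (hμ : 0 < μ)
    (hA : A.PosSemidef) (hB : B.PosSemidef)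
    (hAμ : (A - μ • (1 : Matrix (Fin d) (Fin d) ℝ)).PosSemidef)
    (hBμ : (B - μ • (1 : Matrix (Fin d) (Fin d) ℝ)).PosSemidef) :
    frobNorm (hA.sqrt - hB.sqrt) ≤ frobNorm (A - B) / (2 * Real.sqrt μ) := by
  set S := hA.sqrt
  set T := hB.sqrt
  set X := S - T with hXdef
  have hX : X.IsHermitian := hA.posSemidef_sqrt.1.sub hB.posSemidef_sqrt.1
  have hAB : A - B = S * X + X * T := by
    have hSS : S * S = A := hA.sqrt_mul_self
    have hTT : T * T = B := hB.sqrt_mul_self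
    rw [← hSS, ← hTT, hXdef]
    noncomm_ring
  have key : 2 * √μ * frobNorm X ^ 2 ≤ frobNorm (A - B) * frobNorm X :=
    calc 2 * √μ * frobNorm X ^ 2 = √μ • trace (X * X) + √μ • trace (X * X) := by
          rw [← trace_transpose_mul_self_eq_sq_frobNorm, show Xᵀ = X by simpa using hX.eq]
          simp only [smul_eq_mul]
          ring
      _ ≤ trace (X * S * X) + trace (X * T * X) :=
          add_le_add
            ((hA.posSemidef_sqrt_sub_smul_one hAμ).smul_trace_mul_self_le_trace_mul_mul hX)
            ((hB.posSemidef_sqrt_sub_smul_one hBμ).smul_trace_mul_self_le_trace_mul_mul hX)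
      _ = trace ((A - B) * X) := by
          rw [hAB, add_mul, trace_add, mul_assoc X S X, trace_mul_comm X (S * X)]
      _ ≤ frobNorm (A - B) * frobNorm X := trace_mul_le_frobNorm_mul_frobNorm _ _
  have hc : 0 < 2 * √μ := by positivity
  rcases (frobNorm_nonneg X).eq_or_lt with hX0 | hXpos
  · rw [← hX0]
    exact div_nonneg (frobNorm_nonneg _) hc.le
  · rw [le_div_iff₀ hc]
    exact le_of_mul_le_mul_right (by linarith) hXpos
end

section
/- Let φ : [0,∞) → [0,∞) be continuous and c > 0 be such that φ(t) − φ(s) ≤ −c ∫_s^t φ(r) dr for all 0 ≤ s ≤ t. Then φ(t) ≤ e^{−ct} φ(0) for all t ≥ 0. -/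
/-!
For `z ≥ x` the hypothesis bounds `φ z` by `φ x - c ∫_x^z φ`, a function of `z` whose right
derivative at `x` is `-c φ x`. Hence `t ↦ e^{ct} φ t` has nonpositive lower right Dini derivative
everywhere, and being continuous it cannot increase (the fencing theorem
`image_le_of_liminf_slope_right_le_deriv_boundary`).
-/

open Set Filter Topology Real

theorem frequently_slope_lt_of_sub_le_sub {f h : ℝ → ℝ} {x h' r : ℝ}
    (hle : ∀ᶠ z in 𝓝[>] x, f z - f x ≤ h z - h x)
    (hh : HasDerivWithinAt h h' (Ici x) x) (hr : h' < r) :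
    ∃ᶠ z in 𝓝[>] x, slope f x z < r := by
  refine (hh.liminf_right_slope_le hr).mp ?_
  filter_upwards [hle, self_mem_nhdsWithin] with z hz hxz hslope
  rw [slope_def_field] at hslope ⊢
  exact (div_le_div_of_nonneg_right hz (sub_nonneg.2 hxz.le)).trans_lt hslope

theorem ContinuousOn.hasDerivWithinAt_integral_Ici {φ : ℝ → ℝ} {a b x : ℝ}
    (hφ : ContinuousOn φ (Icc a b)) (hx : x ∈ Ico a b) :
    HasDerivWithinAt (fun z => ∫ r in x..z, φ r) (φ x) (Ici x) x :=
  have hIcc : Icc a b ∈ 𝓝[>] x := Icc_mem_nhdsGT_of_mem hx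
  intervalIntegral.integral_hasDerivWithinAt_right .refl
    ((hφ.stronglyMeasurableAtFilter_nhdsWithin measurableSet_Icc x).filter_mono
      (nhdsWithin_le_of_mem hIcc))
    ((hφ x (Ico_subset_Icc_self hx)).mono_of_mem_nhdsWithin hIcc)

theorem exp_mul_le_of_sub_le_neg_mul_integral {φ : ℝ → ℝ} {a b c : ℝ}
    (hφ : ContinuousOn φ (Icc a b))
    (hineq : ∀ s t, a ≤ s → s ≤ t → t ≤ b → φ t - φ s ≤ -c * ∫ r in s..t, φ r) :
    ∀ t ∈ Icc a b, exp (c * t) * φ t ≤ exp (c * a) * φ a := by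
  refine image_le_of_liminf_slope_right_le_deriv_boundary (f := fun t => exp (c * t) * φ t)
    (B' := 0) (by fun_prop) le_rfl continuousOn_const (fun _ _ => hasDerivWithinAt_const _ _ _)
    fun x hx r hr => ?_
  -- `h` touches `t ↦ e^{ct} φ t` at `x` and dominates it on `[x, b]`.
  let h z := exp (c * z) * (φ x - c * ∫ r in x..z, φ r)
  have hh : HasDerivWithinAt h 0 (Ici x) x := by
    refine ((((hasDerivAt_id x).const_mul c).exp.hasDerivWithinAt (s := Ici x)).fun_mul
      (((hφ.hasDerivWithinAt_integral_Ici hx).const_mul c).const_sub (φ x))).congr_deriv ?_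
    simp only [id, intervalIntegral.integral_same]
    ring
  refine frequently_slope_lt_of_sub_le_sub ?_ hh hr
  filter_upwards [Icc_mem_nhdsGT hx.2] with z hz
  have hhx : h x = exp (c * x) * φ x := by simp [h]
  rw [hhx, sub_le_sub_iff_right]
  exact mul_le_mul_of_nonneg_left (by linarith [hineq x z hx.1 hz.1 hz.2]) (exp_pos _).le

theorem gronwall_neg_rate_general
    (φ : ℝ → ℝ) (c : ℝ)
    (hcont : ContinuousOn φ (Set.Ici 0))
    (hineq : ∀ s t, 0 ≤ s → s ≤ t → φ t - φ s ≤ -c * ∫ r in s..t, φ r) :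
    ∀ t, 0 ≤ t → φ t ≤ Real.exp (-c * t) * φ 0 := by
  intro t ht
  have hweighted : exp (c * t) * φ t ≤ φ 0 := by
    simpa using exp_mul_le_of_sub_le_neg_mul_integral (hcont.mono Icc_subset_Ici_self)
      (fun s r hs hsr _ => hineq s r hs hsr) t ⟨ht, le_rfl⟩
  calc φ t = exp (-c * t) * (exp (c * t) * φ t) := by
        rw [← mul_assoc, ← exp_add, neg_mul, neg_add_cancel, exp_zero, one_mul]
    _ ≤ exp (-c * t) * φ 0 := mul_le_mul_of_nonneg_left hweighted (exp_pos _).le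

/-- Differential Gronwall inequality with negative rate: if `φ : [0,∞) → [0,∞)` is
continuous and `φ(t) - φ(s) ≤ -c ∫_s^t φ(r) dr` for all `0 ≤ s ≤ t` with `c > 0`,
then `φ(t) ≤ e^{-ct} φ(0)`. -/
theorem gronwall_neg_rate
    (φ : ℝ → ℝ) (c : ℝ) (hc : 0 < c)
    (hcont : ContinuousOn φ (Set.Ici 0))
    (hnonneg : ∀ t, 0 ≤ t → 0 ≤ φ t)
    (hineq : ∀ s t, 0 ≤ s → s ≤ t → φ t - φ s ≤ -c * ∫ r in s..t, φ r) :
    ∀ t, 0 ≤ t → φ t ≤ Real.exp (-c * t) * φ 0 :=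
  gronwall_neg_rate_general φ c hcont hineq
end

section
/- Let κ : (0,∞) → ℝ be continuous with κ⁻ (its negative part) vanishing on [R₀, ∞) for some R₀ > 0. Define φ(r) = exp(−(1/2)∫_0^r s κ⁻(s) ds), Φ(r) = ∫_0^r φ(s) ds. Fix R₁ > R₀, let c = (∫_0^{R₁} Φ(t)/φ(t) dt)⁻¹, define g(r) = 1 − (c/2)∫_0^{min(r,R₁)} Φ(t)/φ(t) dt, and f(r) = ∫_0^r φ(s) g(s) ds. Then for all r ≥ 0: (1/2)Φ(r) ≤ f(r) ≤ Φ(r), f is concave and nondecreasing, and r ≤ (2/φ(R₀)) f(r). -/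
open MeasureTheory Set

/-- Monotonicity of the primitive of a nonnegative function that is continuous on `(0,∞)`,
handling the possibly non-integrable (junk value) case. -/
private lemma eberle_aux_mono {w : ℝ → ℝ}
    (hwc : ContinuousOn w (Set.Ioi 0)) (hw0 : ∀ s, 0 ≤ s → 0 ≤ w s)
    {a b : ℝ} (ha : 0 ≤ a) (hab : a ≤ b) :
    (∫ s in (0:ℝ)..a, w s) ≤ ∫ s in (0:ℝ)..b, w s := by
  by_cases hI : IntervalIntegrable w volume 0 b
  · have hIa : IntervalIntegrable w volume 0 a :=
      hI.mono_set (by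
        rw [Set.uIcc_of_le ha, Set.uIcc_of_le (ha.trans hab)]
        exact Set.Icc_subset_Icc le_rfl hab)
    have hIab : IntervalIntegrable w volume a b := hIa.symm.trans hI
    have hadd := intervalIntegral.integral_add_adjacent_intervals hIa hIab
    have hnn : 0 ≤ ∫ s in a..b, w s :=
      intervalIntegral.integral_nonneg hab (fun u hu => hw0 u (ha.trans hu.1))
    linarith
  · rcases eq_or_lt_of_le ha with h0 | h0
    · rw [← h0, intervalIntegral.integral_same, intervalIntegral.integral_undef hI]
    · have hIab : IntervalIntegrable w volume a b :=
        (hwc.mono (by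
          rw [Set.uIcc_of_le hab]
          exact fun x hx => lt_of_lt_of_le h0 hx.1)).intervalIntegrable
      have hIa : ¬ IntervalIntegrable w volume 0 a := fun h => hI (h.trans hIab)
      rw [intervalIntegral.integral_undef hI, intervalIntegral.integral_undef hIa]

/-- Constancy of the primitive beyond `R₀` when the integrand vanishes on `[R₀, ∞)`. -/
private lemma eberle_aux_const {w : ℝ → ℝ} {R₀ : ℝ}
    (hwc : ContinuousOn w (Set.Ioi 0)) (hR₀ : 0 < R₀) (hw0 : ∀ s, R₀ ≤ s → w s = 0)
    {r : ℝ} (hr : R₀ ≤ r) :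
    (∫ s in (0:ℝ)..r, w s) = ∫ s in (0:ℝ)..R₀, w s := by
  have hIab : IntervalIntegrable w volume R₀ r :=
    (hwc.mono (by
      rw [Set.uIcc_of_le hr]
      exact fun x hx => lt_of_lt_of_le hR₀ hx.1)).intervalIntegrable
  have hz : (∫ s in R₀..r, w s) = 0 := by
    rw [intervalIntegral.integral_congr (g := fun _ => (0:ℝ))
      (fun x hx => hw0 x (by rw [Set.uIcc_of_le hr] at hx; exact hx.1))]
    simp
  by_cases hI : IntervalIntegrable w volume 0 R₀
  · rw [← intervalIntegral.integral_add_adjacent_intervals hI hIab, hz, add_zero]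
  · have hIr : ¬ IntervalIntegrable w volume 0 r := fun h =>
      hI (h.mono_set (by
        rw [Set.uIcc_of_le hR₀.le, Set.uIcc_of_le (hR₀.le.trans hr)]
        exact Set.Icc_subset_Icc le_rfl hr))
    rw [intervalIntegral.integral_undef hI, intervalIntegral.integral_undef hIr]

/-- Basic properties of Eberle's comparison function `f` for reflection coupling:
with `φ(r) = exp(-(1/2)∫_0^r s κ⁻(s) ds)`, `Φ(r) = ∫_0^r φ`,
`c = (∫_0^{R₁} Φ/φ)⁻¹`, `g(r) = 1 - (c/2)∫_0^{min(r,R₁)} Φ/φ` and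
`f(r) = ∫_0^r φ g`, one has `(1/2)Φ ≤ f ≤ Φ`, `f` is concave and nondecreasing
on `[0,∞)`, and `r ≤ (2/φ(R₀)) f(r)`. -/
theorem eberle_comparison_function_properties
    (κ : ℝ → ℝ) (hκ : ContinuousOn κ (Set.Ioi 0))
    (R₀ R₁ : ℝ) (hR₀ : 0 < R₀) (hR₁ : R₀ < R₁)
    (hvanish : ∀ r, R₀ ≤ r → max (-(κ r)) 0 = 0)
    (φ Φ g f : ℝ → ℝ) (c : ℝ)
    (hφ : ∀ r, φ r = Real.exp (-(1 / 2) * ∫ s in (0 : ℝ)..r, s * max (-(κ s)) 0))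
    (hΦ : ∀ r, Φ r = ∫ s in (0 : ℝ)..r, φ s)
    (hc : c = (∫ t in (0 : ℝ)..R₁, Φ t / φ t)⁻¹)
    (hg : ∀ r, g r = 1 - c / 2 * ∫ t in (0 : ℝ)..(min r R₁), Φ t / φ t)
    (hf : ∀ r, f r = ∫ s in (0 : ℝ)..r, φ s * g s) :
    (∀ r, 0 ≤ r → (1 / 2) * Φ r ≤ f r ∧ f r ≤ Φ r) ∧
    ConcaveOn ℝ (Set.Ici 0) f ∧
    MonotoneOn f (Set.Ici 0) ∧
    (∀ r, 0 ≤ r → r ≤ (2 / φ R₀) * f r) := by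
  have hR₁0 : (0:ℝ) < R₁ := hR₀.trans hR₁
  set w : ℝ → ℝ := fun s => s * max (-(κ s)) 0 with hwdef
  have hwc : ContinuousOn w (Set.Ioi 0) :=
    continuousOn_id.mul ((continuous_id.max continuous_const).comp_continuousOn hκ.neg)
  have hw0 : ∀ s, 0 ≤ s → 0 ≤ w s := fun s hs => mul_nonneg hs (le_max_right _ _)
  -- basic properties of φ
  have hφpos : ∀ r, 0 < φ r := fun r => (hφ r) ▸ Real.exp_pos _
  have hφanti : AntitoneOn φ (Set.Ici 0) := by
    intro a ha b hb hab
    rw [hφ a, hφ b, Real.exp_le_exp]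
    have := eberle_aux_mono hwc hw0 ha hab
    nlinarith
  have hφ0 : φ 0 = 1 := by rw [hφ 0, intervalIntegral.integral_same]; simp
  have hφconst : ∀ r, R₀ ≤ r → φ r = φ R₀ := by
    intro r hr
    rw [hφ r, hφ R₀,
      eberle_aux_const hwc hR₀ (fun s hs => by simp [hwdef, hvanish s hs]) hr]
  have hφle1 : ∀ r, 0 ≤ r → φ r ≤ 1 := by
    intro r hr
    have := hφanti (Set.self_mem_Ici) hr hr
    rwa [hφ0] at this
  have hφlb : ∀ r, 0 ≤ r → φ R₀ ≤ φ r := by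
    intro r hr
    rcases le_total r R₀ with h | h
    · exact hφanti hr (Set.mem_Ici.2 hR₀.le) h
    · rw [hφconst r h]
  have hφint : ∀ a b, 0 ≤ a → a ≤ b → IntervalIntegrable φ volume a b := by
    intro a b ha hab
    exact (hφanti.mono (by
      rw [Set.uIcc_of_le hab]
      exact fun x hx => ha.trans hx.1)).intervalIntegrable
  -- adjacency helper
  have adj : ∀ (F : ℝ → ℝ), (∀ a b, 0 ≤ a → a ≤ b → IntervalIntegrable F volume a b) →
      ∀ a b, 0 ≤ a → a ≤ b →
      (∫ s in (0:ℝ)..b, F s) = (∫ s in (0:ℝ)..a, F s) + ∫ s in a..b, F s := by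
    intro F hF a b ha hab
    exact (intervalIntegral.integral_add_adjacent_intervals
      (hF 0 a le_rfl ha) (hF a b ha hab)).symm
  -- properties of Φ
  have hΦmono : ∀ a b, 0 ≤ a → a ≤ b → Φ a ≤ Φ b := by
    intro a b ha hab
    rw [hΦ a, hΦ b, adj φ hφint a b ha hab]
    have : 0 ≤ ∫ s in a..b, φ s :=
      intervalIntegral.integral_nonneg hab (fun u _ => (hφpos u).le)
    linarith
  have hΦ0 : Φ 0 = 0 := by rw [hΦ 0, intervalIntegral.integral_same]
  have hΦnn : ∀ r, 0 ≤ r → 0 ≤ Φ r := by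
    intro r hr
    have := hΦmono 0 r le_rfl hr
    rwa [hΦ0] at this
  have hΦlb : ∀ r, 0 ≤ r → φ R₀ * r ≤ Φ r := by
    intro r hr
    rw [hΦ r]
    calc φ R₀ * r = ∫ _ in (0:ℝ)..r, φ R₀ := by
          rw [intervalIntegral.integral_const]; simp [mul_comm]
    _ ≤ ∫ s in (0:ℝ)..r, φ s :=
        intervalIntegral.integral_mono_on hr intervalIntegrable_const
          (hφint 0 r le_rfl hr) (fun x hx => hφlb x hx.1)
  -- properties of q = Φ/φ
  have hqmono : ∀ a b, 0 ≤ a → a ≤ b → Φ a / φ a ≤ Φ b / φ b := by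
    intro a b ha hab
    exact div_le_div₀ (hΦnn b (ha.trans hab)) (hΦmono a b ha hab) (hφpos b)
      (hφanti ha (ha.trans hab) hab)
  have hqnn : ∀ t, 0 ≤ t → 0 ≤ Φ t / φ t :=
    fun t ht => div_nonneg (hΦnn t ht) (hφpos t).le
  have hqint : ∀ a b, 0 ≤ a → a ≤ b →
      IntervalIntegrable (fun t => Φ t / φ t) volume a b := by
    intro a b ha hab
    have hm : MonotoneOn (fun t => Φ t / φ t) (Set.uIcc a b) := by
      intro x hx y hy hxy
      rw [Set.uIcc_of_le hab] at hx hy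
      exact hqmono x y (ha.trans hx.1) hxy
    exact hm.intervalIntegrable
  -- properties of J u = ∫_0^u Φ/φ
  have hJmono : ∀ a b, 0 ≤ a → a ≤ b →
      (∫ t in (0:ℝ)..a, Φ t / φ t) ≤ ∫ t in (0:ℝ)..b, Φ t / φ t := by
    intro a b ha hab
    rw [adj _ hqint a b ha hab]
    have : 0 ≤ ∫ t in a..b, Φ t / φ t :=
      intervalIntegral.integral_nonneg hab (fun u hu => hqnn u (ha.trans hu.1))
    linarith
  have hJnn : ∀ u, 0 ≤ u → 0 ≤ ∫ t in (0:ℝ)..u, Φ t / φ t := by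
    intro u hu
    exact intervalIntegral.integral_nonneg hu (fun t ht => hqnn t ht.1)
  have hJR₁pos : 0 < ∫ t in (0:ℝ)..R₁, Φ t / φ t := by
    have h1 : ∀ t ∈ Set.Icc (0:ℝ) R₁, φ R₀ * t ≤ Φ t / φ t := by
      intro t ht
      rw [le_div_iff₀ (hφpos t)]
      have h2 : φ R₀ * t * φ t ≤ φ R₀ * t :=
        mul_le_of_le_one_right (mul_nonneg (hφpos R₀).le ht.1) (hφle1 t ht.1)
      exact h2.trans (hΦlb t ht.1)
    calc (0:ℝ) < φ R₀ * (R₁ ^ 2 / 2) := mul_pos (hφpos R₀) (by positivity)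
    _ = ∫ t in (0:ℝ)..R₁, φ R₀ * t := by
        rw [intervalIntegral.integral_const_mul, integral_id]; ring
    _ ≤ ∫ t in (0:ℝ)..R₁, Φ t / φ t :=
        intervalIntegral.integral_mono_on hR₁0.le
          ((continuous_const.mul continuous_id).intervalIntegrable _ _)
          (hqint 0 R₁ le_rfl hR₁0.le) h1
  have hcpos : 0 < c := by rw [hc]; exact inv_pos.2 hJR₁pos
  have hcJ : c * (∫ t in (0:ℝ)..R₁, Φ t / φ t) = 1 := by
    rw [hc]; exact inv_mul_cancel₀ hJR₁pos.ne'
  -- properties of g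
  have hgle1 : ∀ r, 0 ≤ r → g r ≤ 1 := by
    intro r hr
    rw [hg r]
    have := hJnn (min r R₁) (le_min hr hR₁0.le)
    nlinarith
  have hghalf : ∀ r, 0 ≤ r → 1 / 2 ≤ g r := by
    intro r hr
    rw [hg r]
    have h1 : (∫ t in (0:ℝ)..(min r R₁), Φ t / φ t) ≤ ∫ t in (0:ℝ)..R₁, Φ t / φ t :=
      hJmono _ _ (le_min hr hR₁0.le) (min_le_right _ _)
    nlinarith
  have hganti : AntitoneOn g (Set.Ici 0) := by
    intro a ha b hb hab
    rw [hg a, hg b]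
    have h1 : (∫ t in (0:ℝ)..(min a R₁), Φ t / φ t)
        ≤ ∫ t in (0:ℝ)..(min b R₁), Φ t / φ t :=
      hJmono _ _ (le_min ha hR₁0.le) (min_le_min_right _ hab)
    nlinarith
  -- properties of h = φ * g
  have hhanti : AntitoneOn (fun s => φ s * g s) (Set.Ici 0) := by
    intro a ha b hb hab
    exact mul_le_mul (hφanti ha hb hab) (hganti ha hb hab)
      (by linarith [hghalf b hb]) (hφpos a).le
  have hhint : ∀ a b, 0 ≤ a → a ≤ b →
      IntervalIntegrable (fun s => φ s * g s) volume a b := by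
    intro a b ha hab
    exact (hhanti.mono (by
      rw [Set.uIcc_of_le hab]
      exact fun x hx => ha.trans hx.1)).intervalIntegrable
  have hhnn : ∀ s, 0 ≤ s → 0 ≤ φ s * g s := by
    intro s hs
    have := hghalf s hs
    nlinarith [(hφpos s).le]
  have hhlb : ∀ s, 0 ≤ s → 1 / 2 * φ s ≤ φ s * g s := by
    intro s hs
    nlinarith [hghalf s hs, hφpos s]
  have hhub : ∀ s, 0 ≤ s → φ s * g s ≤ φ s := by
    intro s hs
    nlinarith [hgle1 s hs, hφpos s]
  -- bounds on f
  have hfb : ∀ r, 0 ≤ r → (1 / 2) * Φ r ≤ f r ∧ f r ≤ Φ r := by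
    intro r hr
    constructor
    · rw [hf r, hΦ r]
      calc (1:ℝ) / 2 * ∫ s in (0:ℝ)..r, φ s = ∫ s in (0:ℝ)..r, 1 / 2 * φ s :=
            (intervalIntegral.integral_const_mul _ _).symm
      _ ≤ ∫ s in (0:ℝ)..r, φ s * g s :=
          intervalIntegral.integral_mono_on hr
            ((hφint 0 r le_rfl hr).const_mul _) (hhint 0 r le_rfl hr)
            (fun x hx => hhlb x hx.1)
    · rw [hf r, hΦ r]
      exact intervalIntegral.integral_mono_on hr (hhint 0 r le_rfl hr)
        (hφint 0 r le_rfl hr) (fun x hx => hhub x hx.1)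
  -- monotonicity of f
  have hfmono : MonotoneOn f (Set.Ici 0) := by
    intro a ha b hb hab
    rw [hf a, hf b, adj _ hhint a b ha hab]
    have : 0 ≤ ∫ s in a..b, φ s * g s :=
      intervalIntegral.integral_nonneg hab (fun u hu => hhnn u (ha.trans hu.1))
    linarith
  -- concavity of f
  have hconc : ConcaveOn ℝ (Set.Ici 0) f := by
    apply concaveOn_of_slope_anti_adjacent (convex_Ici 0)
    intro x y z hx hz hxy hyz
    have hx0 : (0:ℝ) ≤ x := hx
    have hy0 : (0:ℝ) ≤ y := hx0.trans hxy.le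
    have hfyx : f y - f x = ∫ s in x..y, φ s * g s := by
      rw [hf y, hf x, adj _ hhint x y hx0 hxy.le]; ring
    have hfzy : f z - f y = ∫ s in y..z, φ s * g s := by
      rw [hf z, hf y, adj _ hhint y z hy0 hyz.le]; ring
    have h1 : (y - x) * (φ y * g y) ≤ ∫ s in x..y, φ s * g s := by
      calc (y - x) * (φ y * g y) = ∫ _ in x..y, φ y * g y := by
            rw [intervalIntegral.integral_const]; simp [smul_eq_mul]
      _ ≤ ∫ s in x..y, φ s * g s :=
          intervalIntegral.integral_mono_on hxy.le intervalIntegrable_const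
            (hhint x y hx0 hxy.le)
            (fun u hu => hhanti (Set.mem_Ici.2 (hx0.trans hu.1)) (Set.mem_Ici.2 hy0) hu.2)
    have h2 : (∫ s in y..z, φ s * g s) ≤ (z - y) * (φ y * g y) := by
      calc (∫ s in y..z, φ s * g s) ≤ ∫ _ in y..z, φ y * g y :=
            intervalIntegral.integral_mono_on hyz.le (hhint y z hy0 hyz.le)
              intervalIntegrable_const
              (fun u hu => hhanti (Set.mem_Ici.2 hy0) (Set.mem_Ici.2 (hy0.trans hu.1)) hu.1)
      _ = (z - y) * (φ y * g y) := by
            rw [intervalIntegral.integral_const]; simp [smul_eq_mul]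
    rw [hfyx, hfzy, div_le_div_iff₀ (by linarith) (by linarith)]
    nlinarith [mul_le_mul_of_nonneg_right h2 (show (0:ℝ) ≤ y - x by linarith),
      mul_le_mul_of_nonneg_right h1 (show (0:ℝ) ≤ z - y by linarith)]
  refine ⟨hfb, hconc, hfmono, ?_⟩
  intro r hr
  have h1 := (hfb r hr).1
  have h2 := hΦlb r hr
  have h3 := hφpos R₀
  rw [div_mul_eq_mul_div, le_div_iff₀ h3]
  nlinarith
end

section
/- Let (E, ρ) be a complete separable metric space, μ a Borel probability measure on E, and α : [0,∞) → [0,∞) convex with α(0) = 0. Suppose μ satisfies the α-W₁H inequality: α(W₁(η, μ)) ≤ H(η | μ) for every Borel probability measure η on E, where W₁ is the L¹-Wasserstein distance for ρ and H the relative entropy. Then for every bounded Lipschitz f : E → ℝ with Lipschitz constant at most 1 and every λ > 0, ∫ e^{λ(f − μ(f))} dμ ≤ e^{α*(λ)}, where α*(λ) = sup_{r ≥ 0}(rλ − α(r)). -/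
/-!
Apply the `W₁H` inequality to the tilted measure `η ∝ e^{λ(f - μ f)} μ`. With `Z = ∫ e^{λ(f - μ f)} dμ`
and `m = η f - μ f`, its relative entropy is `H(η | μ) = λ m - log Z`, while the easy direction of
Kantorovich–Rubinstein duality gives `m ≤ W₁(η, μ)`. Hence
`log Z ≤ λ m⁺ - α(m⁺) ≤ α*(λ)`.
-/

open MeasureTheory
open scoped ENNReal

/-- The `L¹`-Wasserstein distance (transportation cost) between two measures, as an
extended nonnegative real: the infimum over all couplings `π` of `∫ ρ(x,y) dπ`. -/
noncomputable def wasserstein1 {E : Type*} [MeasurableSpace E] [PseudoEMetricSpace E]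
    (μ ν : Measure E) : ℝ≥0∞ :=
  ⨅ (π : Measure (E × E)) (_ : π.map Prod.fst = μ) (_ : π.map Prod.snd = ν),
    ∫⁻ p, edist p.1 p.2 ∂π

section Kantorovich

variable {E F : Type*} [PseudoEMetricSpace E] [MeasurableSpace E]
  [NormedAddCommGroup F] [NormedSpace ℝ F]

lemma LipschitzWith.edist_integral_le_wasserstein1 {f : E → F} (hf : LipschitzWith 1 f)
    {μ ν : Measure E} (hμ : Integrable f μ) (hν : Integrable f ν) :
    edist (∫ x, f x ∂μ) (∫ x, f x ∂ν) ≤ wasserstein1 μ ν := by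
  refine le_iInf fun π ↦ le_iInf fun hπμ ↦ le_iInf fun hπν ↦ ?_
  subst hπμ hπν
  have h₁ : Integrable (fun p : E × E ↦ f p.1) π :=
    (integrable_map_measure hμ.1 measurable_fst.aemeasurable).1 hμ
  have h₂ : Integrable (fun p : E × E ↦ f p.2) π :=
    (integrable_map_measure hν.1 measurable_snd.aemeasurable).1 hν
  calc edist (∫ x, f x ∂π.map Prod.fst) (∫ x, f x ∂π.map Prod.snd)
      = ‖∫ p, (f p.1 - f p.2) ∂π‖ₑ := by
        rw [integral_map measurable_fst.aemeasurable hμ.1,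
          integral_map measurable_snd.aemeasurable hν.1, integral_sub h₁ h₂, edist_eq_enorm_sub]
    _ ≤ ∫⁻ p, ‖f p.1 - f p.2‖ₑ ∂π := enorm_integral_le_lintegral_enorm _
    _ ≤ ∫⁻ p, edist p.1 p.2 ∂π := lintegral_mono fun p ↦ by
        simpa [← edist_eq_enorm_sub] using hf.edist_le_mul p.1 p.2

end Kantorovich

namespace MeasureTheory

open Real

variable {α : Type*} [MeasurableSpace α] {μ : Measure α} {g : α → ℝ}

lemma llr_tilted_self_ae_eq [SigmaFinite μ] (hg : Integrable (fun x ↦ exp (g x)) μ) :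
    llr (μ.tilted g) μ =ᵐ[μ.tilted g] fun x ↦ g x - log (∫ x, exp (g x) ∂μ) :=
  (tilted_absolutelyContinuous μ g).ae_le (log_rnDeriv_tilted_left_self hg)

lemma integrable_llr_tilted_self [SigmaFinite μ] [NeZero μ]
    (hg : Integrable (fun x ↦ exp (g x)) μ) (hgt : Integrable g (μ.tilted g)) :
    Integrable (llr (μ.tilted g) μ) (μ.tilted g) :=
  have := isProbabilityMeasure_tilted hg
  (hgt.sub (integrable_const _)).congr (llr_tilted_self_ae_eq hg).symm

lemma integral_llr_tilted_self [SigmaFinite μ] [NeZero μ]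
    (hg : Integrable (fun x ↦ exp (g x)) μ) (hgt : Integrable g (μ.tilted g)) :
    ∫ x, llr (μ.tilted g) μ x ∂μ.tilted g
      = ∫ x, g x ∂μ.tilted g - log (∫ x, exp (g x) ∂μ) := by
  have := isProbabilityMeasure_tilted hg
  rw [integral_congr_ae (llr_tilted_self_ae_eq hg), integral_sub hgt (integrable_const _),
    integral_const, probReal_univ, one_smul]

end MeasureTheory

theorem w1h_implies_exponential_moment_bound_general
    {E : Type*} [MetricSpace E]
    [MeasurableSpace E] [BorelSpace E]
    (μ : Measure E) [IsProbabilityMeasure μ]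
    (α : ℝ → ℝ)
    (hW1H : ∀ η : Measure E, IsProbabilityMeasure η → η ≪ μ →
      Integrable (llr η μ) η →
      ∀ w : ℝ, 0 ≤ w → ENNReal.ofReal w ≤ wasserstein1 η μ →
        α w ≤ ∫ x, llr η μ x ∂η) :
    ∀ f : E → ℝ, LipschitzWith 1 f → (∃ Cf : ℝ, ∀ x, |f x| ≤ Cf) →
      ∀ lam : ℝ, 0 < lam →
        ∀ A : ℝ, (∀ r : ℝ, 0 ≤ r → r * lam - α r ≤ A) →
          ∫ x, Real.exp (lam * (f x - ∫ z, f z ∂μ)) ∂μ ≤ Real.exp A := by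
  rintro f hf ⟨C, hC⟩ lam hlam A hA
  set c := ∫ z, f z ∂μ
  set g := fun x ↦ lam * (f x - c)
  have hfm : Measurable f := hf.continuous.measurable
  have hf_int (ν : Measure E) [IsFiniteMeasure ν] : Integrable f ν :=
    .of_bound hfm.aestronglyMeasurable C (ae_of_all _ hC)
  have hexp : Integrable (fun x ↦ Real.exp (g x)) μ :=
    .of_bound (by fun_prop) (Real.exp (lam * (C - c))) (ae_of_all _ fun x ↦ by
      rw [Real.norm_of_nonneg (Real.exp_pos _).le, Real.exp_le_exp]
      nlinarith [le_of_abs_le (hC x)])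
  set η := μ.tilted g
  have hη : IsProbabilityMeasure η := isProbabilityMeasure_tilted hexp
  have hg_int : Integrable g η := ((hf_int η).sub (integrable_const c)).const_mul lam
  set m := ∫ x, f x ∂η - c
  have hgη : ∫ x, g x ∂η = lam * m := by
    rw [integral_const_mul, integral_sub (hf_int η) (integrable_const c), integral_const,
      probReal_univ, one_smul]
  have hW : ENNReal.ofReal (max m 0) ≤ wasserstein1 η μ := by
    refine le_trans ?_ (hf.edist_integral_le_wasserstein1 (hf_int η) (hf_int μ))
    rw [edist_dist, Real.dist_eq]
    exact ENNReal.ofReal_le_ofReal (max_le (le_abs_self m) (abs_nonneg m))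
  have hH := hW1H η hη (tilted_absolutelyContinuous μ g)
    (integrable_llr_tilted_self hexp hg_int) (max m 0) (le_max_right m 0) hW
  rw [integral_llr_tilted_self hexp hg_int, hgη] at hH
  have hlog : Real.log (∫ x, Real.exp (g x) ∂μ) ≤ A := by
    nlinarith [hA (max m 0) (le_max_right m 0), le_max_left m 0]
  calc ∫ x, Real.exp (g x) ∂μ = Real.exp (Real.log (∫ x, Real.exp (g x) ∂μ)) :=
        (Real.exp_log (integral_exp_pos hexp)).symm
    _ ≤ Real.exp A := Real.exp_le_exp.2 hlog

/-- Gozlan–Léonard / Bobkov–Götze characterization (one direction): if a probability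
measure `μ` on a complete separable metric space satisfies the `α`-`W₁H` inequality
`α(W₁(η, μ)) ≤ H(η | μ)` for all probability measures `η` (here expressed via real
lower bounds of `W₁` and via the log-likelihood ratio `llr`, the inequality being
vacuous when `η` is not absolutely continuous or `llr` is not integrable, i.e.
`H(η|μ) = ∞`), then for every bounded `1`-Lipschitz `f` and every `λ > 0`,
`∫ e^{λ(f - μ(f))} dμ ≤ e^{α*(λ)}` where `α*(λ) = sup_{r ≥ 0}(rλ - α(r))`. -/
theorem w1h_implies_exponential_moment_bound
    {E : Type*} [MetricSpace E] [CompleteSpace E] [TopologicalSpace.SeparableSpace E]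
    [MeasurableSpace E] [BorelSpace E]
    (μ : Measure E) [IsProbabilityMeasure μ]
    (α : ℝ → ℝ) (hα0 : α 0 = 0) (hαconv : ConvexOn ℝ (Set.Ici 0) α)
    (hαnonneg : ∀ r, 0 ≤ r → 0 ≤ α r)
    (hW1H : ∀ η : Measure E, IsProbabilityMeasure η → η ≪ μ →
      Integrable (llr η μ) η →
      ∀ w : ℝ, 0 ≤ w → ENNReal.ofReal w ≤ wasserstein1 η μ →
        α w ≤ ∫ x, llr η μ x ∂η) :
    ∀ f : E → ℝ, LipschitzWith 1 f → (∃ Cf : ℝ, ∀ x, |f x| ≤ Cf) →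
      ∀ lam : ℝ, 0 < lam →
        ∀ A : ℝ, (∀ r : ℝ, 0 ≤ r → r * lam - α r ≤ A) →
          ∫ x, Real.exp (lam * (f x - ∫ z, f z ∂μ)) ∂μ ≤ Real.exp A :=
  w1h_implies_exponential_moment_bound_general μ α hW1H
end
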